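/- arXiv:1907.04596 — 8 statements merged into one kernel-verified Lean document; each statement's English description precedes it below -/
import Mathlib

section
/- For every number n ≥ 1 of agents with normalized monotone valuations v_1,…,v_n on a finite set M of goods, there exists a partial allocation X = ⟨X_1,…,X_n⟩ with pool P = M \ (X_1 ∪ … ∪ X_n) such that: (i) X is EFX; (ii) v_i(X_i) ≥ v_i(P) for every agent i; and (iii) |P| is strictly less than the number of sources of the envy-graph G_X, and in particular |P| < n. -/
/-- `X` is an EFX (partial) allocation for valuations `v`: for all agents `i, j` and every
good `g ∈ X j`, we have `v i (X i) ≥ v i (X j \ {g})`. -/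
def EFX {G : Type} [DecidableEq G] {n : ℕ} (v : Fin n → Finset G → ℝ)
    (X : Fin n → Finset G) : Prop :=
  ∀ i j : Fin n, ∀ g ∈ X j, v i (X j \ {g}) ≤ v i (X i)

/-- `s` is a source of the envy-graph of `X`: no agent envies `s`. -/
def IsSource {G : Type} [DecidableEq G] {n : ℕ} (v : Fin n → Finset G → ℝ)
    (X : Fin n → Finset G) (s : Fin n) : Prop :=
  ∀ j : Fin n, ¬ v j (X j) < v j (X s)

/-- Champion lemma: if some agent strictly prefers a set `Z` to her own bundle, then there is
an agent `k` and a subset `W ⊆ Z` that `k` strictly prefers to her own bundle and such that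
nobody EFX-envies `W`. -/
lemma champion_aux {G : Type} [DecidableEq G] {n : ℕ}
    (v : Fin n → Finset G → ℝ) (X : Fin n → Finset G) :
    ∀ (Z : Finset G), ∀ i : Fin n, v i (X i) < v i Z →
      ∃ (k : Fin n) (W : Finset G), W ⊆ Z ∧ v k (X k) < v k W ∧
        ∀ j : Fin n, ∀ h ∈ W, v j (W \ {h}) ≤ v j (X j) := by
  intro Z
  induction Z using Finset.strongInduction with
  | _ Z ih =>
    intro i hi
    by_cases hsafe : ∀ (j : Fin n), ∀ h ∈ Z, v j (Z \ {h}) ≤ v j (X j)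
    · exact ⟨i, Z, Finset.Subset.refl Z, hi, hsafe⟩
    · push_neg at hsafe
      obtain ⟨j, h, hh, hv⟩ := hsafe
      obtain ⟨k, W, hW, h2, h3⟩ :=
        ih (Z \ {h})
          (Finset.sdiff_ssubset (Finset.singleton_subset_iff.mpr hh)
            (Finset.singleton_nonempty h)) j hv
      exact ⟨k, W, hW.trans Finset.sdiff_subset, h2, h3⟩

theorem efx_with_bounded_charity
    {G : Type} [DecidableEq G] (M : Finset G) (n : ℕ) (hn : 1 ≤ n)
    (v : Fin n → Finset G → ℝ)
    (hnorm : ∀ i, v i ∅ = 0)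
    (hmono : ∀ i, ∀ S T : Finset G, S ⊆ T → v i S ≤ v i T) :
    ∃ X : Fin n → Finset G,
      (∀ i, X i ⊆ M) ∧
      (∀ i j, i ≠ j → Disjoint (X i) (X j)) ∧
      EFX v X ∧
      (∀ i, v i (M \ Finset.univ.biUnion X) ≤ v i (X i)) ∧
      (M \ Finset.univ.biUnion X).card < Nat.card {s : Fin n // IsSource v X s} ∧
      (M \ Finset.univ.biUnion X).card < n := by
  classical
  set cand : Finset (Fin n → Finset G) :=
    (Fintype.piFinset fun _ : Fin n => M.powerset).filter
      (fun Y => (∀ i j, i ≠ j → Disjoint (Y i) (Y j)) ∧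
        ∀ i j : Fin n, ∀ g ∈ Y j, v i (Y j \ {g}) ≤ v i (Y i)) with hcand_def
  have hmemcand : ∀ Y : Fin n → Finset G,
      Y ∈ cand ↔ (∀ i, Y i ⊆ M) ∧ (∀ i j, i ≠ j → Disjoint (Y i) (Y j)) ∧
        (∀ i j : Fin n, ∀ g ∈ Y j, v i (Y j \ {g}) ≤ v i (Y i)) := by
    intro Y
    simp only [hcand_def, Finset.mem_filter, Fintype.mem_piFinset, Finset.mem_powerset]
  have hne : cand.Nonempty := by
    refine ⟨fun _ => ∅, (hmemcand _).2 ⟨fun i => Finset.empty_subset M,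
      fun i j _ => Finset.disjoint_empty_left _, ?_⟩⟩
    intro i j g hg
    simp at hg
  obtain ⟨X₁, hX₁, hmax₁⟩ := cand.exists_max_image (fun Y => ∑ i, v i (Y i)) hne
  obtain ⟨X, hX₂, hmin⟩ :=
    (cand.filter (fun Y => ∑ i, v i (X₁ i) ≤ ∑ i, v i (Y i))).exists_min_image
      (fun Y => (M \ Finset.univ.biUnion Y).card)
      ⟨X₁, Finset.mem_filter.2 ⟨hX₁, le_refl _⟩⟩
  rw [Finset.mem_filter] at hX₂
  obtain ⟨hXc, hXge⟩ := hX₂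
  have hfeq : ∑ i, v i (X i) = ∑ i, v i (X₁ i) := le_antisymm (hmax₁ X hXc) hXge
  obtain ⟨hsub, hdis, hefx⟩ := (hmemcand X).1 hXc
  set P := M \ Finset.univ.biUnion X with hP_def
  have hPX : ∀ j : Fin n, ∀ g ∈ P, g ∉ X j := by
    intro j g hg hgX
    exact (Finset.mem_sdiff.1 hg).2 (Finset.mem_biUnion.2 ⟨j, Finset.mem_univ j, hgX⟩)
  have hPM : ∀ g ∈ P, g ∈ M := fun g hg => (Finset.mem_sdiff.1 hg).1
  -- the optimality engine
  have key : ∀ Y : Fin n → Finset G, (∀ i, Y i ⊆ M) → (∀ i j, i ≠ j → Disjoint (Y i) (Y j)) →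
      (∀ i j : Fin n, ∀ g ∈ Y j, v i (Y j \ {g}) ≤ v i (X i)) →
      (∀ i, v i (X i) ≤ v i (Y i)) →
      (∑ i, v i (Y i) ≤ ∑ i, v i (X i)) ∧ P.card ≤ (M \ Finset.univ.biUnion Y).card := by
    intro Y h1 h2 h3 h4
    have hYefx : ∀ i j : Fin n, ∀ g ∈ Y j, v i (Y j \ {g}) ≤ v i (Y i) :=
      fun i j g hg => (h3 i j g hg).trans (h4 i)
    have hYc : Y ∈ cand := (hmemcand Y).2 ⟨h1, h2, hYefx⟩
    have hle : ∑ i, v i (Y i) ≤ ∑ i, v i (X i) := hfeq ▸ hmax₁ Y hYc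
    have hge : ∑ i, v i (X i) ≤ ∑ i, v i (Y i) := Finset.sum_le_sum (fun i _ => h4 i)
    exact ⟨hle, hmin Y (Finset.mem_filter.2 ⟨hYc, by rw [← hfeq]; exact hge⟩)⟩
  -- condition (ii): nobody envies the pool
  have hpool : ∀ i, v i P ≤ v i (X i) := by
    by_contra hcon
    push_neg at hcon
    obtain ⟨i, hi⟩ := hcon
    obtain ⟨k, W, hWP, hkW, hsafe⟩ := champion_aux v X P i hi
    set Y := Function.update X k W with hY_def
    have hYk : Y k = W := Function.update_self _ _ _
    have hYo : ∀ j, j ≠ k → Y j = X j := fun j hj => Function.update_of_ne hj _ _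
    have h4 : ∀ j, v j (X j) ≤ v j (Y j) := by
      intro j
      by_cases hj : j = k
      · subst hj; rw [hYk]; exact hkW.le
      · rw [hYo j hj]
    have h1 : ∀ j, Y j ⊆ M := by
      intro j
      by_cases hj : j = k
      · subst hj; rw [hYk]; exact fun x hx => hPM x (hWP hx)
      · rw [hYo j hj]; exact hsub j
    have h2 : ∀ a b, a ≠ b → Disjoint (Y a) (Y b) := by
      have hWX : ∀ j, j ≠ k → Disjoint W (X j) := fun j hj =>
        Finset.disjoint_left.2 (fun {x} hx => hPX j x (hWP hx))
      intro a b hab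
      by_cases ha : a = k
      · subst ha
        rw [hYk, hYo b (Ne.symm hab)]
        exact hWX b (Ne.symm hab)
      · by_cases hb : b = k
        · subst hb
          rw [hYk, hYo a ha]
          exact (hWX a ha).symm
        · rw [hYo a ha, hYo b hb]; exact hdis a b hab
    have h3 : ∀ a b : Fin n, ∀ g ∈ Y b, v a (Y b \ {g}) ≤ v a (X a) := by
      intro a b g hg
      by_cases hb : b = k
      · subst hb; rw [hYk] at hg ⊢; exact hsafe a g hg
      · rw [hYo b hb] at hg ⊢; exact hefx a b g hg
    obtain ⟨hle, -⟩ := key Y h1 h2 h3 h4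
    have hslt : ∑ i, v i (X i) < ∑ i, v i (Y i) :=
      Finset.sum_lt_sum (fun j _ => h4 j) ⟨k, Finset.mem_univ k, by rw [hYk]; exact hkW⟩
    linarith
  -- condition (iii): the pool is smaller than the number of sources
  set Sfin := Finset.univ.filter (fun s => IsSource v X s) with hS_def
  have hcard : P.card < Sfin.card := by
    by_contra hcon
    push_neg at hcon
    have hemb : Nonempty (↥Sfin ↪ ↥P) := by
      rw [Function.Embedding.nonempty_iff_card_le, Fintype.card_coe, Fintype.card_coe]
      exact hcon
    obtain ⟨e⟩ := hemb
    set gd : ∀ s : Fin n, s ∈ Sfin → G := fun s hs => ((e ⟨s, hs⟩ : ↥P) : G) with hgd_def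
    have hgdP : ∀ s hs, gd s hs ∈ P := fun s hs => (e ⟨s, hs⟩).2
    have hgdinj : ∀ s hs s' hs', gd s hs = gd s' hs' → s = s' := by
      intro s hs s' hs' h
      have h2 : (⟨s, hs⟩ : ↥Sfin) = ⟨s', hs'⟩ := e.injective (Subtype.ext h)
      exact congrArg Subtype.val h2
    -- adding a pool good to a source cannot stay EFX
    have hnosafe : ∀ s (hs : s ∈ Sfin),
        ¬ ∀ (j : Fin n), ∀ h ∈ insert (gd s hs) (X s),
            v j (insert (gd s hs) (X s) \ {h}) ≤ v j (X j) := by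
      intro s hs hsafe
      have hgP : gd s hs ∈ P := hgdP s hs
      set Y := Function.update X s (insert (gd s hs) (X s)) with hY_def
      have hYs : Y s = insert (gd s hs) (X s) := Function.update_self _ _ _
      have hYo : ∀ j, j ≠ s → Y j = X j := fun j hj => Function.update_of_ne hj _ _
      have h1 : ∀ j, Y j ⊆ M := by
        intro j
        by_cases hj : j = s
        · rw [hj, hYs]
          exact Finset.insert_subset (hPM _ hgP) (hsub s)
        · rw [hYo j hj]; exact hsub j
      have h2 : ∀ a b, a ≠ b → Disjoint (Y a) (Y b) := by
        have hBX : ∀ j, j ≠ s → Disjoint (insert (gd s hs) (X s)) (X j) := by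
          intro j hj
          rw [Finset.disjoint_left]
          intro x hx hxj
          rcases Finset.mem_insert.1 hx with rfl | hx2
          · exact hPX j _ hgP hxj
          · exact Finset.disjoint_left.1 (hdis s j (Ne.symm hj)) hx2 hxj
        intro a b hab
        by_cases ha : a = s
        · have hbs : b ≠ s := fun h => hab (ha.trans h.symm)
          rw [ha, hYs, hYo b hbs]
          exact hBX b hbs
        · by_cases hb : b = s
          · rw [hb, hYs, hYo a ha]
            exact (hBX a ha).symm
          · rw [hYo a ha, hYo b hb]; exact hdis a b hab
      have h3 : ∀ a b : Fin n, ∀ g' ∈ Y b, v a (Y b \ {g'}) ≤ v a (X a) := by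
        intro a b g' hg'
        by_cases hb : b = s
        · rw [hb, hYs] at hg' ⊢
          exact hsafe a g' hg'
        · rw [hYo b hb] at hg' ⊢
          exact hefx a b g' hg'
      have h4 : ∀ j, v j (X j) ≤ v j (Y j) := by
        intro j
        by_cases hj : j = s
        · rw [hj, hYs]
          exact hmono s _ _ (Finset.subset_insert _ _)
        · rw [hYo j hj]
      obtain ⟨-, hcard2⟩ := key Y h1 h2 h3 h4
      have hbi : Finset.univ.biUnion Y = insert (gd s hs) (Finset.univ.biUnion X) := by
        ext x
        simp only [Finset.mem_biUnion, Finset.mem_univ, true_and, Finset.mem_insert]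
        constructor
        · rintro ⟨i, hi⟩
          by_cases hj : i = s
          · rw [hj, hYs] at hi
            rcases Finset.mem_insert.1 hi with h | h
            · exact Or.inl h
            · exact Or.inr ⟨s, h⟩
          · rw [hYo i hj] at hi; exact Or.inr ⟨i, hi⟩
        · rintro (rfl | ⟨i, hi⟩)
          · exact ⟨s, by rw [hYs]; exact Finset.mem_insert_self _ _⟩
          · by_cases hj : i = s
            · rw [hj] at hi
              exact ⟨s, by rw [hYs]; exact Finset.mem_insert_of_mem hi⟩
            · exact ⟨i, by rw [hYo i hj]; exact hi⟩
      have hpoolY : M \ Finset.univ.biUnion Y = P.erase (gd s hs) := by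
        rw [hbi, Finset.sdiff_insert, hP_def]
      rw [hpoolY, Finset.card_erase_of_mem hgP] at hcard2
      have hppos : 0 < P.card := Finset.card_pos.2 ⟨gd s hs, hgP⟩
      omega
    -- champions for each source
    have hch : ∀ s (hs : s ∈ Sfin), ∃ (k : Fin n) (W : Finset G),
        W ⊆ insert (gd s hs) (X s) ∧ v k (X k) < v k W ∧
        ∀ j : Fin n, ∀ h ∈ W, v j (W \ {h}) ≤ v j (X j) := by
      intro s hs
      have h := hnosafe s hs
      push_neg at h
      obtain ⟨j, h', hh', hv'⟩ := h
      obtain ⟨k, W, hW, h2, h3⟩ :=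
        champion_aux v X (insert (gd s hs) (X s) \ {h'}) j hv'
      exact ⟨k, W, hW.trans Finset.sdiff_subset, h2, h3⟩
    choose ch Zc hZsub hZlt hZsafe using hch
    have hnonsource : ∀ a : Fin n, a ∉ Sfin → ∃ j, v j (X j) < v j (X a) := by
      intro a ha
      rw [hS_def, Finset.mem_filter] at ha
      simp only [Finset.mem_univ, true_and] at ha
      unfold IsSource at ha
      push_neg at ha
      exact ha
    -- predecessor, new bundle and cover for every agent
    have hPNB : ∀ a : Fin n, ∃ (q : Fin n) (N B : Finset G),
        v q (X q) < v q N ∧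
        (∀ j : Fin n, ∀ h ∈ N, v j (N \ {h}) ≤ v j (X j)) ∧
        N ⊆ B ∧ X a ⊆ B ∧ B ⊆ M ∧
        (∀ x ∈ B, x ∈ X a ∨ ∃ hs : a ∈ Sfin, x = gd a hs) := by
      intro a
      by_cases ha : a ∈ Sfin
      · refine ⟨ch a ha, Zc a ha, insert (gd a ha) (X a), hZlt a ha, hZsafe a ha, hZsub a ha,
          Finset.subset_insert _ _,
          Finset.insert_subset (hPM _ (hgdP a ha)) (hsub a), ?_⟩
        intro x hx
        rcases Finset.mem_insert.1 hx with rfl | hx2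
        · exact Or.inr ⟨ha, rfl⟩
        · exact Or.inl hx2
      · obtain ⟨j, hj⟩ := hnonsource a ha
        exact ⟨j, X a, X a, hj, fun j' h hh => hefx j' a h hh, Finset.Subset.refl _,
          Finset.Subset.refl _, hsub a, fun x hx => Or.inl hx⟩
    choose p nb BB hP1 hP2 hnbBB hXBB hBBM hBBmem using hPNB
    have hBBdis : ∀ a b, a ≠ b → Disjoint (BB a) (BB b) := by
      intro a b hab
      rw [Finset.disjoint_left]
      intro x hxa hxb
      rcases hBBmem a x hxa with h1 | ⟨ha, rfl⟩
      · rcases hBBmem b x hxb with h2 | ⟨hb, he⟩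
        · exact Finset.disjoint_left.1 (hdis a b hab) h1 h2
        · exact hPX a x (he ▸ hgdP b hb) h1
      · rcases hBBmem b _ hxb with h2 | ⟨hb, he⟩
        · exact hPX b _ (hgdP a ha) h2
        · exact hab (hgdinj a ha b hb he)
    -- find a cycle of the predecessor map
    set b0 : Fin n := ⟨0, hn⟩ with hb0_def
    obtain ⟨x, y, hxy, hfe⟩ :=
      Fintype.exists_ne_map_eq_of_card_lt (fun j : Fin (n+1) => p^[(j : ℕ)] b0) (by simp)
    have hml : ∃ m l : ℕ, m < l ∧ p^[m] b0 = p^[l] b0 := by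
      rcases lt_or_gt_of_ne hxy with h | h
      · exact ⟨x, y, h, hfe⟩
      · exact ⟨y, x, h, hfe.symm⟩
    obtain ⟨m, l, hml', hme⟩ := hml
    set b := p^[m] b0 with hb_def
    set t0 := l - m with ht0_def
    have ht0pos : 0 < t0 := by omega
    have ht0fix : p^[t0] b = b := by
      rw [hb_def, ← Function.iterate_add_apply, ht0_def]
      rw [Nat.sub_add_cancel hml'.le]
      exact hme.symm
    set c : ℕ → Fin n := fun j => p^[j] b with hc_def
    have hcsucc : ∀ j, c (j+1) = p (c j) := by
      intro j
      simp only [hc_def]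
      exact Function.iterate_succ_apply' p j b
    have hcper : ∀ j, c (j + t0) = c j := by
      intro j
      simp only [hc_def]
      rw [Function.iterate_add_apply, ht0fix]
    have hcmod : ∀ j, c (j % t0) = c j := by
      intro j
      induction j using Nat.strong_induction_on with
      | _ j ih =>
        by_cases hj : j < t0
        · rw [Nat.mod_eq_of_lt hj]
        · push_neg at hj
          have h1 : j % t0 = (j - t0) % t0 := Nat.mod_eq_sub_mod hj
          have h2 : c (j - t0) = c j := by
            conv_rhs => rw [show j = (j - t0) + t0 by omega]
            exact (hcper (j - t0)).symm
          rw [h1, ih (j - t0) (by omega), h2]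
    set C : Finset (Fin n) := (Finset.range t0).image c with hC_def
    have hbC : b ∈ C := by
      rw [hC_def]
      exact Finset.mem_image.2 ⟨0, Finset.mem_range.2 ht0pos, rfl⟩
    have hcC : ∀ j, c j ∈ C := by
      intro j
      rw [hC_def]
      exact Finset.mem_image.2 ⟨j % t0, Finset.mem_range.2 (Nat.mod_lt _ ht0pos), hcmod j⟩
    have hprev_ex : ∀ a ∈ C, ∃ q, q ∈ C ∧ p q = a := by
      intro a ha
      rw [hC_def] at ha
      obtain ⟨j, hj, rfl⟩ := Finset.mem_image.1 ha
      rw [Finset.mem_range] at hj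
      refine ⟨c ((j + (t0 - 1)) % t0), hcC _, ?_⟩
      rw [← hcsucc, ← hcmod ((j + (t0 - 1)) % t0 + 1)]
      congr 1
      rw [Nat.mod_add_mod, show j + (t0 - 1) + 1 = j + t0 by omega,
        Nat.add_mod_right, Nat.mod_eq_of_lt hj]
    choose prev hprevC hpprev using hprev_ex
    set Y : Fin n → Finset G := fun a => if ha : a ∈ C then nb (prev a ha) else X a with hY_def
    have hYon : ∀ a (ha : a ∈ C), Y a = nb (prev a ha) := by
      intro a ha
      simp only [hY_def]
      rw [dif_pos ha]
    have hYoff : ∀ a, a ∉ C → Y a = X a := by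
      intro a ha
      simp only [hY_def]
      rw [dif_neg ha]
    have himp : ∀ i, v i (X i) ≤ v i (Y i) := by
      intro i
      by_cases hi : i ∈ C
      · rw [hYon i hi]
        have h := hP1 (prev i hi)
        rw [hpprev i hi] at h
        exact h.le
      · rw [hYoff i hi]
    have hstrict : v b (X b) < v b (Y b) := by
      rw [hYon b hbC]
      have h := hP1 (prev b hbC)
      rw [hpprev b hbC] at h
      exact h
    have h3Y : ∀ i j : Fin n, ∀ g ∈ Y j, v i (Y j \ {g}) ≤ v i (X i) := by
      intro i j g hg
      by_cases hj : j ∈ C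
      · rw [hYon j hj] at hg ⊢
        exact hP2 (prev j hj) i g hg
      · rw [hYoff j hj] at hg ⊢
        exact hefx i j g hg
    have h1Y : ∀ i, Y i ⊆ M := by
      intro i
      by_cases hi : i ∈ C
      · rw [hYon i hi]; exact (hnbBB _).trans (hBBM _)
      · rw [hYoff i hi]; exact hsub i
    have h2Y : ∀ a b', a ≠ b' → Disjoint (Y a) (Y b') := by
      intro a b' hab
      by_cases ha : a ∈ C <;> by_cases hb : b' ∈ C
      · rw [hYon a ha, hYon b' hb]
        have hne : prev a ha ≠ prev b' hb := by
          intro he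
          apply hab
          rw [← hpprev a ha, ← hpprev b' hb, he]
        exact (hBBdis _ _ hne).mono (hnbBB _) (hnbBB _)
      · rw [hYon a ha, hYoff b' hb]
        have hne : prev a ha ≠ b' := fun he => hb (he ▸ hprevC a ha)
        exact (hBBdis _ _ hne).mono (hnbBB _) (hXBB _)
      · rw [hYoff a ha, hYon b' hb]
        have hne : prev b' hb ≠ a := fun he => ha (he ▸ hprevC b' hb)
        exact ((hBBdis _ _ hne).mono (hnbBB _) (hXBB _)).symm
      · rw [hYoff a ha, hYoff b' hb]; exact hdis a b' hab
    obtain ⟨hle, -⟩ := key Y h1Y h2Y h3Y himp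
    have hslt : ∑ i, v i (X i) < ∑ i, v i (Y i) :=
      Finset.sum_lt_sum (fun i _ => himp i) ⟨b, Finset.mem_univ b, hstrict⟩
    linarith
  have hnat : Nat.card {s : Fin n // IsSource v X s} = Sfin.card := by
    rw [Nat.card_eq_fintype_card, hS_def]
    simp [Fintype.card_subtype]
  have hSn : Sfin.card ≤ n := by
    calc Sfin.card ≤ (Finset.univ : Finset (Fin n)).card := Finset.card_filter_le _ _
      _ = n := by simp
  refine ⟨X, hsub, hdis, hefx, ?_, ?_, ?_⟩
  · exact hpool
  · rw [hnat]; exact hcard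
  · exact lt_of_lt_of_le hcard hSn
end

section
/- Let X be a partial allocation and let i_0 → i_1 → ⋯ → i_{k−1} → i_0 be a cycle in the envy-graph G_X on pairwise distinct agents i_0,…,i_{k−1} (that is, v_{i_ℓ}(X_{i_ℓ}) < v_{i_ℓ}(X_{i_{ℓ+1 mod k}}) for every ℓ). Define X' by X'_{i_ℓ} = X_{i_{ℓ+1 mod k}} for 0 ≤ ℓ ≤ k−1 and X'_j = X_j for every agent j ∉ {i_0,…,i_{k−1}}. Then: (a) if X is EFX, then X' is EFX; and (b) φ(X') > φ(X). -/
/-- Swapping bundles along a cycle of the envy-graph preserves EFX and strictly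
increases social welfare. -/
theorem decycle_preserves_EFX_and_increases_welfare
    {G : Type} [DecidableEq G] {n : ℕ}
    (v : Fin n → Finset G → ℝ) (X X' : Fin n → Finset G)
    (k : ℕ) (hk : 0 < k) (c : Fin k → Fin n) (hcinj : Function.Injective c)
    (hcycle : ∀ ℓ : Fin k,
      v (c ℓ) (X (c ℓ)) < v (c ℓ) (X (c ⟨(ℓ.val + 1) % k, Nat.mod_lt _ hk⟩)))
    (hX'cyc : ∀ ℓ : Fin k,
      X' (c ℓ) = X (c ⟨(ℓ.val + 1) % k, Nat.mod_lt _ hk⟩))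
    (hX'other : ∀ j : Fin n, (∀ ℓ : Fin k, c ℓ ≠ j) → X' j = X j) :
    (EFX v X → EFX v X') ∧ ∑ i, v i (X i) < ∑ i, v i (X' i) := by
  have pointwise : ∀ i : Fin n, v i (X i) ≤ v i (X' i) := by
    intro i
    by_cases h : ∃ ℓ, c ℓ = i
    · obtain ⟨ℓ, rfl⟩ := h
      rw [hX'cyc]
      exact (hcycle ℓ).le
    · rw [hX'other i (fun ℓ hℓ => h ⟨ℓ, hℓ⟩)]
  constructor
  · intro hefx i j g hg
    by_cases h : ∃ ℓ, c ℓ = j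
    · obtain ⟨ℓ, rfl⟩ := h
      rw [hX'cyc] at hg ⊢
      exact (hefx i _ g hg).trans (pointwise i)
    · rw [hX'other j (fun ℓ hℓ => h ⟨ℓ, hℓ⟩)] at hg ⊢
      exact (hefx i j g hg).trans (pointwise i)
  · refine Finset.sum_lt_sum (fun i _ => pointwise i)
      ⟨c ⟨0, hk⟩, Finset.mem_univ _, ?_⟩
    rw [hX'cyc]
    exact hcycle _
end

section
/- Let X be an EFX partial allocation with pool P, let Z be an inclusion-wise minimal envied subset of P, and let i be an agent with v_i(Z) > v_i(X_i). Define X' by X'_i = Z and X'_j = X_j for all j ≠ i. Then X' is an EFX partial allocation (whose pool is P' = X_i ∪ (P \ Z)) and φ(X') > φ(X). -/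
/-- A set `S` is envied (with respect to allocation `X`). -/
def Envied {G : Type} [DecidableEq G] {n : ℕ} (v : Fin n → Finset G → ℝ)
    (X : Fin n → Finset G) (S : Finset G) : Prop :=
  ∃ i : Fin n, v i (X i) < v i S

/-- `Z` is an inclusion-wise minimal envied subset of `S` (with respect to `X`). -/
def MinEnviedSubset {G : Type} [DecidableEq G] {n : ℕ} (v : Fin n → Finset G → ℝ)
    (X : Fin n → Finset G) (Z S : Finset G) : Prop :=
  Z ⊆ S ∧ Envied v X Z ∧ ∀ Z' ⊂ Z, ¬ Envied v X Z'

/-- Rule `U₁`: giving a minimal envied subset of the pool to an agent envying it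
yields an EFX allocation with pool `X i ∪ (P \ Z)` and strictly larger social welfare. -/
theorem rule_U1
    {G : Type} [DecidableEq G] (M : Finset G) {n : ℕ}
    (v : Fin n → Finset G → ℝ)
    (hnorm : ∀ i, v i ∅ = 0)
    (hmono : ∀ i, ∀ S T : Finset G, S ⊆ T → v i S ≤ v i T)
    (X : Fin n → Finset G)
    (hsub : ∀ i, X i ⊆ M)
    (hdisj : ∀ i j, i ≠ j → Disjoint (X i) (X j))
    (hEFX : EFX v X)
    (Z : Finset G) (hZ : MinEnviedSubset v X Z (M \ Finset.univ.biUnion X))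
    (i : Fin n) (hi : v i (X i) < v i Z) :
    (∀ j, Function.update X i Z j ⊆ M) ∧
    (∀ j k, j ≠ k → Disjoint (Function.update X i Z j) (Function.update X i Z k)) ∧
    EFX v (Function.update X i Z) ∧
    M \ Finset.univ.biUnion (Function.update X i Z)
      = X i ∪ ((M \ Finset.univ.biUnion X) \ Z) ∧
    ∑ j, v j (X j) < ∑ j, v j (Function.update X i Z j) := by
  obtain ⟨hZsub, hZenv, hZmin⟩ := hZ
  have hZpool : ∀ x ∈ Z, x ∈ M ∧ ∀ j, x ∉ X j := by
    intro x hx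
    have h := hZsub hx
    simp only [Finset.mem_sdiff, Finset.mem_biUnion, Finset.mem_univ, true_and,
      not_exists] at h
    exact h
  have hnotenv : ∀ g ∈ Z, ∀ j, v j (Z \ {g}) ≤ v j (X j) := by
    intro g hg j
    have hss : Z \ {g} ⊂ Z :=
      Finset.sdiff_ssubset (Finset.singleton_subset_iff.2 hg) (Finset.singleton_nonempty g)
    have := hZmin _ hss
    simp only [Envied, not_exists, not_lt] at this
    exact this j
  refine ⟨?_, ?_, ?_, ?_, ?_⟩
  · intro j
    rcases eq_or_ne j i with rfl | hji
    · rw [Function.update_self]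
      exact fun x hx => (hZpool x hx).1
    · rw [Function.update_of_ne hji]; exact hsub j
  · intro j k hjk
    rcases eq_or_ne j i with rfl | hji
    · rw [Function.update_self, Function.update_of_ne (Ne.symm hjk)]
      exact Finset.disjoint_left.2 fun x hx => (hZpool x hx).2 k
    · rcases eq_or_ne k i with rfl | hki
      · rw [Function.update_self, Function.update_of_ne hji]
        exact Finset.disjoint_right.2 fun x hx => (hZpool x hx).2 j
      · rw [Function.update_of_ne hji, Function.update_of_ne hki]
        exact hdisj j k hjk
  · intro j k g hg
    rcases eq_or_ne k i with rfl | hki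
    · rw [Function.update_self] at hg ⊢
      rcases eq_or_ne j k with rfl | hji
      · rw [Function.update_self]
        exact (hnotenv g hg j).trans hi.le
      · rw [Function.update_of_ne hji]
        exact hnotenv g hg j
    · rw [Function.update_of_ne hki] at hg ⊢
      rcases eq_or_ne j i with rfl | hji
      · rw [Function.update_self]
        exact (hEFX j k g hg).trans hi.le
      · rw [Function.update_of_ne hji]
        exact hEFX j k g hg
  · ext x
    simp only [Finset.mem_sdiff, Finset.mem_biUnion, Finset.mem_univ, true_and,
      not_exists, Finset.mem_union, Function.update_apply]
    constructor
    · rintro ⟨hM, h⟩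
      have hxZ : x ∉ Z := by have := h i; simpa using this
      by_cases hXi : x ∈ X i
      · exact Or.inl hXi
      · refine Or.inr ⟨⟨hM, ?_⟩, hxZ⟩
        intro j
        rcases eq_or_ne j i with rfl | hji
        · exact hXi
        · have := h j; rwa [if_neg hji] at this
    · rintro (hXi | ⟨⟨hM, h⟩, hxZ⟩)
      · refine ⟨hsub i hXi, fun j => ?_⟩
        rcases eq_or_ne j i with rfl | hji
        · rw [if_pos rfl]
          exact fun hx => (hZpool x hx).2 j hXi
        · rw [if_neg hji]
          exact Finset.disjoint_left.1 (hdisj i j (Ne.symm hji)) hXi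
      · refine ⟨hM, fun j => ?_⟩
        rcases eq_or_ne j i with rfl | hji
        · rwa [if_pos rfl]
        · rw [if_neg hji]; exact h j
  · apply Finset.sum_lt_sum
    · intro j _
      rcases eq_or_ne j i with rfl | hji
      · rw [Function.update_self]; exact hi.le
      · rw [Function.update_of_ne hji]
    · exact ⟨i, Finset.mem_univ i, by rw [Function.update_self]; exact hi⟩
end

section
/- For every number n ≥ 1 of agents with normalized monotone valuations v_1,…,v_n on a finite set M of goods and every real ε > 0, there exists a partial allocation X = ⟨X_1,…,X_n⟩ with pool P = M \ (X_1 ∪ … ∪ X_n) such that: (i) for every pair of agents i, j and every good g ∈ X_j, (1+ε)·v_i(X_i) ≥ v_i(X_j \ {g}); (ii) for every agent i, (1+ε)·v_i(X_i) ≥ v_i(P); and (iii) |P| < n. -/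
/-!
Take a partial allocation maximizing, among the `(1+ε)`-EFX ones, the total value and then the
number of allocated goods. If someone envies the pool, an inclusion-minimal envied subset of the
pool can be handed to one of its enviers; this raises the total value and keeps EFX by minimality.
If the pool had as many goods as there are agents, give each agent `b` its own pool good `g b`.
Adding `g b` to `X b` must break EFX (otherwise the number of allocated goods grows), so
`X b ∪ {g b}` has a minimally envied subset `Z b`, envied by some agent `f b`. Along the cycles
of `f`, handing each `Z b` to `f b` again raises the total value while keeping EFX.
-/

open Finset Function

namespace Function

theorem periodicPts_nonempty {α : Type*} [Finite α] [Nonempty α] (f : α → α) :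
    (periodicPts f).Nonempty := by
  inhabit α
  obtain ⟨m, n, heq, hne⟩ : ∃ m n, f^[m] default = f^[n] default ∧ m ≠ n := by
    simpa [Injective] using not_injective_infinite_finite (f^[·] (default : α))
  wlog hmn : m < n generalizing m n
  · exact this n m heq.symm hne.symm (by omega)
  refine ⟨f^[m] default, mk_mem_periodicPts (n := n - m) (by omega) ?_⟩
  change f^[n - m] (f^[m] default) = f^[m] default
  rw [← iterate_add_apply, Nat.sub_add_cancel hmn.le, heq]

theorem exists_perm_eq_or_eq_self {α : Type*} [Finite α] [Nonempty α] (f : α → α) :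
    ∃ π : Equiv.Perm α, (∃ a, π a = f a) ∧ ∀ a, π a = f a ∨ π a = a := by
  classical
  let π := Equiv.Perm.ofSubtype ((bijOn_periodicPts f).equiv)
  have hπ : ∀ a ∈ periodicPts f, π a = f a := fun a ha =>
    Equiv.Perm.ofSubtype_apply_of_mem _ ha
  obtain ⟨a, ha⟩ := periodicPts_nonempty f
  refine ⟨π, ⟨a, hπ a ha⟩, fun b => ?_⟩
  by_cases hb : b ∈ periodicPts f
  · exact .inl (hπ b hb)
  · exact .inr (Equiv.Perm.ofSubtype_apply_of_not_mem _ hb)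

end Function

theorem Pairwise.disjoint_update {ι α : Type*} [DecidableEq ι] [Lattice α] [OrderBot α]
    {X : ι → α} (hX : Pairwise (Disjoint on X)) {j : ι} {Z : α}
    (hZ : ∀ k ≠ j, Disjoint Z (X k)) : Pairwise (Disjoint on update X j Z) := by
  intro a b hab
  by_cases ha : a = j <;> by_cases hb : b = j
  · exact absurd (ha.trans hb.symm) hab
  · subst ha
    simpa [onFun, update_of_ne hb] using hZ b hb
  · subst hb
    simpa [onFun, update_of_ne ha] using (hZ a ha).symm
  · simpa [onFun, update_of_ne ha, update_of_ne hb] using hX hab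

namespace FairDivision

variable {ι G : Type*} {v : ι → Finset G → ℝ} {ε : ℝ} {X Y : ι → Finset G} {k j b : ι}
  {Z : Finset G} {g : G}

def Envies (v : ι → Finset G → ℝ) (ε : ℝ) (X : ι → Finset G) (k : ι) (Z : Finset G) : Prop :=
  (1 + ε) * v k (X k) < v k Z

def Envied (v : ι → Finset G → ℝ) (ε : ℝ) (X : ι → Finset G) (Z : Finset G) : Prop :=
  ∃ k, Envies v ε X k Z

def potential [Fintype ι] (v : ι → Finset G → ℝ) (X : ι → Finset G) : ℝ ×ₗ ℕ :=
  toLex (∑ i, v i (X i), ∑ i, #(X i))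

theorem Envies.lt (hε : 0 ≤ ε) (hv : 0 ≤ v k (X k)) (h : Envies v ε X k Z) :
    v k (X k) < v k Z :=
  (le_mul_of_one_le_left hv (by linarith)).trans_lt h

theorem potential_lt_of_subset [Fintype ι] (hmono : ∀ i, Monotone (v i))
    (hXY : ∀ i, X i ⊆ Y i) (hb : X b ⊂ Y b) : potential v X < potential v Y :=
  Prod.Lex.toLex_lt_toLex'.2 ⟨sum_le_sum fun i _ => hmono i (hXY i),
    fun _ => sum_lt_sum (fun i _ => card_le_card (hXY i)) ⟨b, mem_univ b, card_lt_card hb⟩⟩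

variable [DecidableEq G]

def IsApproxEFX (v : ι → Finset G → ℝ) (ε : ℝ) (X : ι → Finset G) : Prop :=
  ∀ i j, ∀ g ∈ X j, v i (X j \ {g}) ≤ (1 + ε) * v i (X i)

structure IsApproxEFXAllocation (M : Finset G) (v : ι → Finset G → ℝ) (ε : ℝ)
    (X : ι → Finset G) : Prop where
  subset : ∀ i, X i ⊆ M
  disjoint : Pairwise (Disjoint on X)
  efx : IsApproxEFX v ε X

def pool [Fintype ι] (M : Finset G) (X : ι → Finset G) : Finset G :=
  M \ univ.biUnion X

theorem not_envied_sdiff_of_minimal (hZ : Minimal (Envied v ε X) Z) (hg : g ∈ Z) :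
    ¬ Envied v ε X (Z \ {g}) :=
  hZ.not_prop_of_lt (by simpa [sdiff_singleton_eq_erase] using erase_ssubset hg)

theorem IsApproxEFX.not_envied (hX : IsApproxEFX v ε X) (hg : g ∈ X j) :
    ¬ Envied v ε X (X j \ {g}) :=
  fun ⟨i, hi⟩ => (hX i j g hg).not_gt hi

theorem isApproxEFX_of_not_envied (hε : 0 ≤ ε) (hle : ∀ k, v k (X k) ≤ v k (Y k))
    (hY : ∀ j, ∀ g ∈ Y j, ¬ Envied v ε X (Y j \ {g})) : IsApproxEFX v ε Y := fun i j g hg =>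
  calc v i (Y j \ {g}) ≤ (1 + ε) * v i (X i) := not_lt.1 fun h => hY j g hg ⟨i, h⟩
    _ ≤ (1 + ε) * v i (Y i) := mul_le_mul_of_nonneg_left (hle i) (by linarith)

theorem IsApproxEFXAllocation.reallocate [Fintype ι] {M : Finset G}
    (hX : IsApproxEFXAllocation M v ε X) (hε : 0 ≤ ε) (hv : ∀ i S, 0 ≤ v i S)
    (hYM : ∀ i, Y i ⊆ M) (hYd : Pairwise (Disjoint on Y))
    (hY : ∀ m, Y m = X m ∨ Envies v ε X m (Y m) ∧ Minimal (Envied v ε X) (Y m))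
    (hchange : ∃ m, Envies v ε X m (Y m)) :
    IsApproxEFXAllocation M v ε Y ∧ potential v X < potential v Y := by
  have hle : ∀ m, v m (X m) ≤ v m (Y m) := fun m => by
    rcases hY m with hm | ⟨hm, -⟩
    · rw [hm]
    · exact (hm.lt hε (hv _ _)).le
  refine ⟨⟨hYM, hYd, isApproxEFX_of_not_envied hε hle fun m g hg => ?_⟩, ?_⟩
  · rcases hY m with hm | ⟨-, hmin⟩
    · rw [hm] at hg ⊢
      exact hX.efx.not_envied hg
    · exact not_envied_sdiff_of_minimal hmin hg
  · obtain ⟨m, hm⟩ := hchange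
    exact Prod.Lex.toLex_lt_toLex.2 <| .inl <|
      sum_lt_sum (fun i _ => hle i) ⟨m, mem_univ m, hm.lt hε (hv _ _)⟩

theorem exists_isApproxEFXAllocation_maximal [Fintype ι] (M : Finset G)
    (v : ι → Finset G → ℝ) (ε : ℝ) :
    ∃ X, IsApproxEFXAllocation M v ε X ∧
      ∀ Y, IsApproxEFXAllocation M v ε Y → potential v Y ≤ potential v X := by
  classical
  have hempty : IsApproxEFXAllocation M v ε fun _ => ∅ :=
    ⟨fun _ => empty_subset M, fun _ _ _ => disjoint_bot_left, fun _ _ _ hg => absurd hg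
      (notMem_empty _)⟩
  obtain ⟨X, hX, hmax⟩ := exists_max_image
    ((Fintype.piFinset fun _ => M.powerset).filter (IsApproxEFXAllocation M v ε))
    (potential v) ⟨_, mem_filter.2 ⟨Fintype.mem_piFinset.2 fun _ => empty_mem_powerset M, hempty⟩⟩
  refine ⟨X, (mem_filter.1 hX).2, fun Y hY => hmax Y (mem_filter.2 ⟨?_, hY⟩)⟩
  exact Fintype.mem_piFinset.2 fun i => mem_powerset.2 (hY.subset i)

theorem disjoint_pool [Fintype ι] (M : Finset G) (X : ι → Finset G) (k : ι) :
    Disjoint (pool M X) (X k) :=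
  disjoint_left.2 fun _ ha hak => (mem_sdiff.1 ha).2 (mem_biUnion.2 ⟨k, mem_univ k, hak⟩)

section Maximal

variable [Fintype ι] [DecidableEq ι] {M : Finset G}

theorem IsApproxEFXAllocation.not_envied_pool (hX : IsApproxEFXAllocation M v ε X)
    (hmax : ∀ Y, IsApproxEFXAllocation M v ε Y → potential v Y ≤ potential v X)
    (hε : 0 ≤ ε) (hv : ∀ i S, 0 ≤ v i S) : ¬ Envied v ε X (pool M X) := by
  intro hP
  obtain ⟨Z, hZP, hZ⟩ := exists_minimal_le_of_wellFoundedLT _ _ hP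
  obtain ⟨j, hj⟩ := hZ.prop
  have hYM : ∀ i, update X j Z i ⊆ M := (forall_update_iff X fun _ s => s ⊆ M).2
    ⟨hZP.trans sdiff_subset, fun i _ => hX.subset i⟩
  have hYd : Pairwise (Disjoint on update X j Z) :=
    hX.disjoint.disjoint_update fun k _ => (disjoint_pool M X k).mono_left hZP
  have hY (m : ι) : update X j Z m = X m ∨
      Envies v ε X m (update X j Z m) ∧ Minimal (Envied v ε X) (update X j Z m) := by
    rcases eq_or_ne m j with rfl | hm
    · exact .inr (by simpa using ⟨hj, hZ⟩)
    · exact .inl (update_of_ne hm Z X)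
  obtain ⟨hY', hlt⟩ := hX.reallocate hε hv hYM hYd hY ⟨j, by simpa using hj⟩
  exact (hmax _ hY').not_gt hlt

theorem IsApproxEFXAllocation.exists_envied_insert (hX : IsApproxEFXAllocation M v ε X)
    (hmax : ∀ Y, IsApproxEFXAllocation M v ε Y → potential v Y ≤ potential v X)
    (hε : 0 ≤ ε) (hmono : ∀ i, Monotone (v i)) {a : G} (ha : a ∈ pool M X) (b : ι) :
    ∃ h ∈ insert a (X b), Envied v ε X (insert a (X b) \ {h}) := by
  by_contra! hnot
  have haX (k : ι) : a ∉ X k := disjoint_left.1 (disjoint_pool M X k) ha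
  have hXY : ∀ i, X i ⊆ update X b (insert a (X b)) i :=
    (forall_update_iff X fun i s => X i ⊆ s).2 ⟨subset_insert a (X b), fun _ _ => subset_rfl⟩
  have hYM : ∀ i, update X b (insert a (X b)) i ⊆ M := (forall_update_iff X fun _ s => s ⊆ M).2
    ⟨insert_subset (sdiff_subset ha) (hX.subset b), fun i _ => hX.subset i⟩
  have hYd : Pairwise (Disjoint on update X b (insert a (X b))) :=
    hX.disjoint.disjoint_update fun k hk => disjoint_insert_left.2 ⟨haX k, hX.disjoint hk.symm⟩
  have hefx : IsApproxEFX v ε (update X b (insert a (X b))) :=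
    isApproxEFX_of_not_envied hε (fun i => hmono i (hXY i)) fun m g hg => by
      rcases eq_or_ne m b with rfl | hm
      · simp only [update_self] at hg ⊢
        exact hnot g hg
      · simp only [update_of_ne hm] at hg ⊢
        exact hX.efx.not_envied hg
  refine (hmax _ ⟨hYM, hYd, hefx⟩).not_gt (potential_lt_of_subset hmono hXY (b := b) ?_)
  simpa using ssubset_insert (haX b)

theorem IsApproxEFXAllocation.card_pool_lt [Nonempty ι] (hX : IsApproxEFXAllocation M v ε X)
    (hmax : ∀ Y, IsApproxEFXAllocation M v ε Y → potential v Y ≤ potential v X)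
    (hε : 0 ≤ ε) (hmono : ∀ i, Monotone (v i)) (hv : ∀ i S, 0 ≤ v i S) :
    #(pool M X) < Fintype.card ι := by
  by_contra! hcard
  obtain ⟨g⟩ := Embedding.nonempty_of_card_le (hcard.trans_eq (Fintype.card_coe _).symm)
  have hgX (b k : ι) : (g b : G) ∉ X k := disjoint_left.1 (disjoint_pool M X k) (g b).2
  let B b := insert (g b : G) (X b)
  have hBM (b : ι) : B b ⊆ M := insert_subset (sdiff_subset (g b).2) (hX.subset b)
  have hBd : Pairwise (Disjoint on B) := fun b c hbc => by
    simp only [onFun, B, disjoint_insert_left, disjoint_insert_right, mem_insert, not_or]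
    exact ⟨⟨fun h => hbc (g.injective (Subtype.ext h)).symm, hgX c b⟩, hgX b c, hX.disjoint hbc⟩
  have hZ (b : ι) : ∃ k Z, Z ⊆ B b ∧ Envies v ε X k Z ∧ Minimal (Envied v ε X) Z := by
    obtain ⟨h, -, henv⟩ := hX.exists_envied_insert hmax hε hmono (g b).2 b
    obtain ⟨Z, hZB, hZ⟩ := exists_minimal_le_of_wellFoundedLT _ _ henv
    obtain ⟨k, hk⟩ := hZ.prop
    exact ⟨k, Z, hZB.trans sdiff_subset, hk, hZ⟩
  choose f Z hZB hZenv hZmin using hZ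
  obtain ⟨π, ⟨b, hb⟩, hπ⟩ := exists_perm_eq_or_eq_self f
  -- agent `π b` receives the bundle `W b`
  let W b := if π b = f b then Z b else X b
  have hWB (b : ι) : W b ⊆ B b := by
    by_cases h : π b = f b
    · simpa only [W, if_pos h] using hZB b
    · simpa only [W, if_neg h] using subset_insert _ (X b)
  have hWd : Pairwise (Disjoint on W) := fun b c hbc => (hBd hbc).mono (hWB b) (hWB c)
  have hW (b : ι) : W b = X (π b) ∨ Envies v ε X (π b) (W b) ∧ Minimal (Envied v ε X) (W b) := by
    by_cases h : π b = f b
    · simp only [W, if_pos h]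
      exact .inr ⟨h ▸ hZenv b, hZmin b⟩
    · simp only [W, if_neg h]
      exact .inl (congrArg X ((hπ b).resolve_left h).symm)
  have hWb : Envies v ε X (π b) (W b) := by
    simp only [W, if_pos hb]
    exact hb ▸ hZenv b
  obtain ⟨hY, hlt⟩ := hX.reallocate (Y := W ∘ π.symm) hε hv (fun m => (hWB _).trans (hBM _))
    (hWd.comp_of_injective π.symm.injective) (fun m => by simpa using hW (π.symm m))
    ⟨π b, by simpa using hWb⟩
  exact (hmax _ hY).not_gt hlt

end Maximal

end FairDivision

/-- Approximate EFX with bounded charity: for every `ε > 0` there is a partial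
allocation that is `(1+ε)`-approximately EFX, where nobody `(1+ε)`-approximately
envies the pool, and the pool has fewer than `n` goods. -/
theorem approx_efx_with_bounded_charity
    {G : Type} [DecidableEq G] (M : Finset G) (n : ℕ) (hn : 1 ≤ n)
    (v : Fin n → Finset G → ℝ)
    (hnorm : ∀ i, v i ∅ = 0)
    (hmono : ∀ i, ∀ S T : Finset G, S ⊆ T → v i S ≤ v i T)
    (ε : ℝ) (hε : 0 < ε) :
    ∃ X : Fin n → Finset G,
      (∀ i, X i ⊆ M) ∧
      (∀ i j, i ≠ j → Disjoint (X i) (X j)) ∧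
      (∀ i j : Fin n, ∀ g ∈ X j, v i (X j \ {g}) ≤ (1 + ε) * v i (X i)) ∧
      (∀ i, v i (M \ Finset.univ.biUnion X) ≤ (1 + ε) * v i (X i)) ∧
      (M \ Finset.univ.biUnion X).card < n := by
  have hmono' (i : Fin n) : Monotone (v i) := fun S T => hmono i S T
  have hv (i : Fin n) (S : Finset G) : 0 ≤ v i S := hnorm i ▸ hmono i ∅ S (empty_subset S)
  have : Nonempty (Fin n) := ⟨⟨0, hn⟩⟩
  obtain ⟨X, hX, hmax⟩ := FairDivision.exists_isApproxEFXAllocation_maximal M v ε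
  refine ⟨X, hX.subset, fun _ _ h => hX.disjoint h, hX.efx, fun i => ?_, ?_⟩
  · exact not_lt.1 fun h => hX.not_envied_pool hmax hε.le hv ⟨i, h⟩
  · exact (hX.card_pool_lt hmax hε.le hmono' hv).trans_eq (Fintype.card_fin n)
end

section
/- For two agents with (possibly distinct) normalized monotone valuations v_1, v_2 on a finite set M of goods, there exists a complete EFX allocation of M, i.e., a partition ⟨X_1, X_2⟩ of M such that for all i, j ∈ {1,2} and every g ∈ X_j we have v_i(X_i) ≥ v_i(X_j \ {g}). -/
/-!
Cut and choose. The first agent splits `M` into `A` and `M \ A` so as to maximise the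
leximin++ objective: the lexicographically smaller of the pairs (value, size) of the two
bundles. If some good `g` of the other bundle `B` had `u (B \ {g}) > u A`, moving `g` from
`B` to `A` would make both pairs exceed the pair of `A`, so the objective would increase.
Hence the first agent is EFX-content with either bundle, and the second agent takes the
bundle it prefers.
-/

open Finset

variable {G : Type*} [DecidableEq G]

def EnvyFreeUpToAny (u : Finset G → ℝ) (A B : Finset G) : Prop :=
  ∀ g ∈ B, u (B \ {g}) ≤ u A

lemma EnvyFreeUpToAny.of_le {u : Finset G → ℝ} (hu : Monotone u) {A B : Finset G}
    (h : u B ≤ u A) : EnvyFreeUpToAny u A B :=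
  fun _ _ => (hu sdiff_subset).trans h

noncomputable def leximinKey (u : Finset G → ℝ) (M A : Finset G) : ℝ ×ₗ ℕ :=
  min (toLex (u A, #A)) (toLex (u (M \ A), #(M \ A)))

lemma leximinKey_sdiff (u : Finset G → ℝ) {M A : Finset G} (hA : A ⊆ M) :
    leximinKey u M (M \ A) = leximinKey u M A := by
  rw [leximinKey, leximinKey, Finset.sdiff_sdiff_eq_self hA, min_comm]

lemma toLex_lt_toLex_insert {u : Finset G → ℝ} (hu : Monotone u) {A : Finset G} {g : G}
    (hg : g ∉ A) : toLex (u A, #A) < toLex (u (insert g A), #(insert g A)) := by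
  rw [Prod.Lex.toLex_lt_toLex, card_insert_of_notMem hg]
  exact (hu (subset_insert g A)).lt_or_eq.imp_right fun h => ⟨h, Nat.lt_succ_self _⟩

lemma envyFreeUpToAny_sdiff_of_max {u : Finset G → ℝ} (hu : Monotone u) {M A : Finset G}
    (hA : A ⊆ M) (hmax : ∀ A' ⊆ M, leximinKey u M A' ≤ leximinKey u M A) :
    EnvyFreeUpToAny u A (M \ A) := by
  intro g hg
  by_contra! hlt
  obtain ⟨hgM, hgA⟩ := mem_sdiff.mp hg
  have hrest : M \ insert g A = (M \ A) \ {g} := by rw [Finset.sdiff_insert, Finset.erase_eq]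
  have hgrow : leximinKey u M A < leximinKey u M (insert g A) := by
    refine (min_le_left _ _).trans_lt (lt_min (toLex_lt_toLex_insert hu hgA) ?_)
    rw [hrest, Prod.Lex.toLex_lt_toLex]
    exact Or.inl hlt
  exact (hmax _ (insert_subset hgM hA)).not_gt hgrow

lemma exists_envyFreeUpToAny_split {u : Finset G → ℝ} (hu : Monotone u) (M : Finset G) :
    ∃ A ⊆ M, EnvyFreeUpToAny u A (M \ A) ∧ EnvyFreeUpToAny u (M \ A) A := by
  obtain ⟨A, hAM, hmax⟩ := M.powerset.exists_max_image (leximinKey u M) ⟨∅, empty_mem_powerset M⟩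
  rw [mem_powerset] at hAM
  replace hmax : ∀ A' ⊆ M, leximinKey u M A' ≤ leximinKey u M A :=
    fun A' hA' => hmax A' (mem_powerset.mpr hA')
  refine ⟨A, hAM, envyFreeUpToAny_sdiff_of_max hu hAM hmax, ?_⟩
  have hcompl := envyFreeUpToAny_sdiff_of_max hu (sdiff_subset (s := M) (t := A))
    (by rwa [leximinKey_sdiff u hAM])
  rwa [Finset.sdiff_sdiff_eq_self hAM] at hcompl

lemma isEFX_cut_and_choose {v : Fin 2 → Finset G → ℝ} (hv : ∀ i, Monotone (v i))
    {M P Q : Finset G} (hPQ : Disjoint P Q) (hM : P ∪ Q = M) (hP : EnvyFreeUpToAny (v 0) P Q)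
    (hchoice : v 1 P ≤ v 1 Q) :
    (∀ i j, i ≠ j → Disjoint (![P, Q] i) (![P, Q] j)) ∧
      Finset.univ.biUnion ![P, Q] = M ∧
      (∀ i j : Fin 2, ∀ g ∈ ![P, Q] j, v i (![P, Q] j \ {g}) ≤ v i (![P, Q] i)) := by
  refine ⟨?_, by simp [Fin.univ_succ, hM], ?_⟩
  · simp [Fin.forall_fin_two, hPQ, hPQ.symm]
  · simp only [Fin.forall_fin_two, Matrix.cons_val_zero, Matrix.cons_val_one]
    exact ⟨⟨EnvyFreeUpToAny.of_le (hv 0) le_rfl, hP⟩,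
      EnvyFreeUpToAny.of_le (hv 1) hchoice, EnvyFreeUpToAny.of_le (hv 1) le_rfl⟩

theorem complete_efx_two_agents_general
    {G : Type} [DecidableEq G] (M : Finset G)
    (v : Fin 2 → Finset G → ℝ)
    (hmono : ∀ i, ∀ S T : Finset G, S ⊆ T → v i S ≤ v i T) :
    ∃ X : Fin 2 → Finset G,
      (∀ i j, i ≠ j → Disjoint (X i) (X j)) ∧
      Finset.univ.biUnion X = M ∧
      (∀ i j : Fin 2, ∀ g ∈ X j, v i (X j \ {g}) ≤ v i (X i)) := by
  have hv : ∀ i, Monotone (v i) := fun i _ _ => hmono i _ _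
  obtain ⟨A, hAM, hA, hB⟩ := exists_envyFreeUpToAny_split (hv 0) M
  rcases le_total (v 1 A) (v 1 (M \ A)) with hchoice | hchoice
  · exact ⟨_, isEFX_cut_and_choose hv disjoint_sdiff (union_sdiff_of_subset hAM) hA hchoice⟩
  · exact ⟨_, isEFX_cut_and_choose hv sdiff_disjoint (sdiff_union_of_subset hAM) hB hchoice⟩

/-- For two agents with (possibly distinct) normalized monotone valuations on a finite
set `M` of goods, a complete EFX allocation of `M` always exists. -/
theorem complete_efx_two_agents
    {G : Type} [DecidableEq G] (M : Finset G)
    (v : Fin 2 → Finset G → ℝ)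
    (hnorm : ∀ i, v i ∅ = 0)
    (hmono : ∀ i, ∀ S T : Finset G, S ⊆ T → v i S ≤ v i T) :
    ∃ X : Fin 2 → Finset G,
      (∀ i j, i ≠ j → Disjoint (X i) (X j)) ∧
      Finset.univ.biUnion X = M ∧
      (∀ i j : Fin 2, ∀ g ∈ X j, v i (X j \ {g}) ≤ v i (X i)) :=
  complete_efx_two_agents_general M v hmono
end

section
/- Let there be n ≥ 2 agents with normalized monotone valuations v_1,…,v_n on a finite set M of goods, and suppose some agent i_0 satisfies v_{i_0}(S) = 0 for every S ⊆ M. Then there exists a complete EFX allocation of M, i.e., a partition ⟨X_1,…,X_n⟩ of M such that for all agents i, j and every good g ∈ X_j we have v_i(X_i) ≥ v_i(X_j \ {g}). -/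
/-!
Among the partial EFX allocations of `M` that leave `i₀` empty-handed (the empty allocation is
one), take one of maximal welfare `∑ i, v i (X i)`. If some agent envied a subset of the
unallocated pool, pick an inclusion-minimal envied subset `Z` and an agent `a` envying it, and
replace `X a` by `Z`: minimality of `Z` keeps the allocation EFX, `a ≠ i₀` because `i₀` envies
nothing, and welfare strictly increases. Hence nobody envies any part of the pool, and giving
the whole pool to `i₀` completes the allocation.
-/

open Finset Function

variable {G ι : Type*}

def IsEFX [DecidableEq G] (v : ι → Finset G → ℝ) (X : ι → Finset G) : Prop :=
  ∀ i j, ∀ g ∈ X j, v i (X j \ {g}) ≤ v i (X i)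

theorem exists_minimal_envied {v : ι → Finset G → ℝ} {X : ι → Finset G} {Z₀ : Finset G}
    {a₀ : ι} (henvy : v a₀ (X a₀) < v a₀ Z₀) :
    ∃ a, ∃ Z ⊆ Z₀, v a (X a) < v a Z ∧ ∀ i, ∀ W ⊂ Z, v i W ≤ v i (X i) := by
  obtain ⟨Z, hZ, hmin⟩ :=
    exists_minimal_le_of_wellFoundedLT (fun Z => ∃ a, v a (X a) < v a Z) Z₀ ⟨a₀, henvy⟩
  obtain ⟨a, ha⟩ := hmin.prop
  refine ⟨a, Z, hZ, ha, fun i W hW => ?_⟩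
  by_contra! h
  exact hmin.not_prop_of_lt hW ⟨i, h⟩

theorem IsEFX.update_of_minimal_envied [DecidableEq G] [DecidableEq ι]
    {v : ι → Finset G → ℝ} {X : ι → Finset G}
    (hX : IsEFX v X) (hmono : ∀ i, Monotone (v i)) {a : ι} {Z : Finset G}
    (henvy : v a (X a) < v a Z) (hmin : ∀ i, ∀ W ⊂ Z, v i W ≤ v i (X i)) :
    IsEFX v (update X a Z) := by
  intro p q g hg
  rcases eq_or_ne q a with rfl | hq
  · rw [update_self] at hg ⊢
    rcases eq_or_ne p q with rfl | hp
    · rw [update_self]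
      exact hmono p sdiff_subset
    · rw [update_of_ne hp]
      exact hmin p _ (sdiff_ssubset (singleton_subset_iff.2 hg) (singleton_nonempty g))
  · rw [update_of_ne hq] at hg ⊢
    rcases eq_or_ne p a with rfl | hp
    · rw [update_self]
      exact (hX p q g hg).trans henvy.le
    · rw [update_of_ne hp]
      exact hX p q g hg

theorem IsEFX.update_of_unenvied [DecidableEq G] [DecidableEq ι]
    {M : Finset G} {v : ι → Finset G → ℝ} {X : ι → Finset G}
    (hX : IsEFX v X) (hXM : ∀ i, X i ⊆ M) {a : ι} (ha : ∀ S ⊆ M, v a S = 0)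
    {P : Finset G} (hPM : P ⊆ M) (hP : ∀ i, ∀ Z ⊆ P, v i Z ≤ v i (X i)) :
    IsEFX v (update X a P) := by
  intro p q g hg
  rcases eq_or_ne p a with rfl | hp
  · have hq : update X p P q ⊆ M :=
      (forall_update_iff X fun _ s => s ⊆ M).2 ⟨hPM, fun i _ => hXM i⟩ q
    rw [update_self, ha _ (sdiff_subset.trans hq), ha P hPM]
  · rw [update_of_ne hp]
    rcases eq_or_ne q a with rfl | hq
    · rw [update_self] at hg ⊢
      exact hP p _ sdiff_subset
    · rw [update_of_ne hq] at hg ⊢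
      exact hX p q g hg

theorem pairwise_disjoint_update [DecidableEq ι] {X : ι → Finset G}
    (hX : Pairwise (Disjoint on X)) {a : ι} {Z : Finset G}
    (hZ : ∀ i ≠ a, Disjoint Z (X i)) : Pairwise (Disjoint on update X a Z) := by
  intro i j hij
  rcases eq_or_ne i a with rfl | hi
  · rw [onFun, update_self, update_of_ne hij.symm]
    exact hZ j hij.symm
  rcases eq_or_ne j a with rfl | hj
  · rw [onFun, update_self, update_of_ne hi]
    exact (hZ i hi).symm
  · rw [onFun, update_of_ne hi, update_of_ne hj]
    exact hX hij

theorem disjoint_sdiff_biUnion [DecidableEq G] [Fintype ι]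
    (M : Finset G) (X : ι → Finset G) (i : ι) :
    Disjoint (M \ univ.biUnion X) (X i) :=
  sdiff_disjoint.mono_right (subset_biUnion_of_mem X (mem_univ i))

theorem sum_lt_sum_update [DecidableEq ι] [Fintype ι]
    (v : ι → Finset G → ℝ) (X : ι → Finset G) {a : ι} {Z : Finset G}
    (h : v a (X a) < v a Z) : ∑ i, v i (X i) < ∑ i, v i (update X a Z i) := by
  refine sum_lt_sum (fun i _ => ?_) ⟨a, mem_univ a, by rwa [update_self]⟩
  rcases eq_or_ne i a with rfl | hi
  · rw [update_self]
    exact h.le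
  · rw [update_of_ne hi]

theorem biUnion_update_sdiff_biUnion [DecidableEq G] [DecidableEq ι] [Fintype ι]
    {M : Finset G} {X : ι → Finset G} (hXM : ∀ i, X i ⊆ M)
    {a : ι} (ha : X a = ∅) : univ.biUnion (update X a (M \ univ.biUnion X)) = M := by
  refine (biUnion_subset.2 fun i _ => ?_).antisymm fun g hg => ?_
  · exact (forall_update_iff X fun _ s => s ⊆ M).2 ⟨sdiff_subset, fun i _ => hXM i⟩ i
  rw [mem_biUnion]
  by_cases hgX : ∃ i, g ∈ X i
  · obtain ⟨i, hi⟩ := hgX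
    have hia : i ≠ a := by
      rintro rfl
      simp [ha] at hi
    exact ⟨i, mem_univ i, by rwa [update_of_ne hia]⟩
  · refine ⟨a, mem_univ a, ?_⟩
    rw [update_self, mem_sdiff, mem_biUnion]
    exact ⟨hg, fun ⟨i, _, hi⟩ => hgX ⟨i, hi⟩⟩

theorem exists_isEFX_unenvied_pool [DecidableEq G] [Fintype ι]
    (M : Finset G) (v : ι → Finset G → ℝ)
    (hmono : ∀ i, Monotone (v i)) (i₀ : ι) (hi₀ : ∀ S ⊆ M, v i₀ S = 0) :
    ∃ X : ι → Finset G, (∀ i, X i ⊆ M) ∧ Pairwise (Disjoint on X) ∧ X i₀ = ∅ ∧ IsEFX v X ∧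
      ∀ i, ∀ Z ⊆ M \ univ.biUnion X, v i Z ≤ v i (X i) := by
  classical
  set S := (Fintype.piFinset fun _ : ι => M.powerset).filter
    fun X => Pairwise (Disjoint on X) ∧ X i₀ = ∅ ∧ IsEFX v X
  have mem_S {X : ι → Finset G} :
      X ∈ S ↔ (∀ i, X i ⊆ M) ∧ Pairwise (Disjoint on X) ∧ X i₀ = ∅ ∧ IsEFX v X := by
    simp only [S, mem_filter, Fintype.mem_piFinset, mem_powerset]
  have hempty : (fun _ => ∅) ∈ S :=
    mem_S.2 ⟨fun _ => empty_subset M, fun _ _ _ => disjoint_empty_left _, rfl,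
      fun _ _ g hg => absurd hg (notMem_empty g)⟩
  obtain ⟨X, hXS, hXmax⟩ := S.exists_max_image (fun X => ∑ i, v i (X i)) ⟨_, hempty⟩
  obtain ⟨hXM, hdisj, hXi₀, hefx⟩ := mem_S.1 hXS
  refine ⟨X, hXM, hdisj, hXi₀, hefx, ?_⟩
  by_contra! ⟨a₀, Z₀, hZ₀, henvy₀⟩
  obtain ⟨a, Z, hZ, henvy, hmin⟩ := exists_minimal_envied henvy₀
  have hZM : Z ⊆ M := hZ.trans (hZ₀.trans sdiff_subset)
  have ha : a ≠ i₀ := by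
    rintro rfl
    rw [hXi₀, hi₀ ∅ (empty_subset M), hi₀ Z hZM] at henvy
    exact henvy.false
  have hupdate : update X a Z ∈ S := by
    refine mem_S.2 ⟨(forall_update_iff X fun _ s => s ⊆ M).2 ⟨hZM, fun i _ => hXM i⟩,
      pairwise_disjoint_update hdisj fun i _ => ?_, ?_,
      hefx.update_of_minimal_envied hmono henvy hmin⟩
    · exact (disjoint_sdiff_biUnion M X i).mono_left (hZ.trans hZ₀)
    · rwa [update_of_ne ha.symm]
  exact (hXmax _ hupdate).not_gt (sum_lt_sum_update v X henvy)

theorem complete_efx_with_indifferent_agent_general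
    {G : Type} [DecidableEq G] (M : Finset G) (n : ℕ)
    (v : Fin n → Finset G → ℝ)
    (hmono : ∀ i, ∀ S T : Finset G, S ⊆ T → v i S ≤ v i T)
    (i₀ : Fin n) (hi₀ : ∀ S : Finset G, S ⊆ M → v i₀ S = 0) :
    ∃ X : Fin n → Finset G,
      (∀ i j, i ≠ j → Disjoint (X i) (X j)) ∧
      Finset.univ.biUnion X = M ∧
      (∀ i j : Fin n, ∀ g ∈ X j, v i (X j \ {g}) ≤ v i (X i)) := by
  obtain ⟨X, hXM, hdisj, hXi₀, hefx, hpool⟩ :=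
    exists_isEFX_unenvied_pool M v (fun i S T => hmono i S T) i₀ hi₀
  refine ⟨update X i₀ (M \ univ.biUnion X), fun i j hij => ?_,
    biUnion_update_sdiff_biUnion hXM hXi₀, hefx.update_of_unenvied hXM hi₀ sdiff_subset hpool⟩
  exact pairwise_disjoint_update hdisj (fun k _ => disjoint_sdiff_biUnion M X k) hij

/-- If among `n ≥ 2` agents with normalized monotone valuations there is one agent who
values every subset of goods at zero, then a complete EFX allocation always exists. -/
theorem complete_efx_with_indifferent_agent
    {G : Type} [DecidableEq G] (M : Finset G) (n : ℕ) (hn : 2 ≤ n)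
    (v : Fin n → Finset G → ℝ)
    (hnorm : ∀ i, v i ∅ = 0)
    (hmono : ∀ i, ∀ S T : Finset G, S ⊆ T → v i S ≤ v i T)
    (i₀ : Fin n) (hi₀ : ∀ S : Finset G, S ⊆ M → v i₀ S = 0) :
    ∃ X : Fin n → Finset G,
      (∀ i j, i ≠ j → Disjoint (X i) (X j)) ∧
      Finset.univ.biUnion X = M ∧
      (∀ i j : Fin n, ∀ g ∈ X j, v i (X j \ {g}) ≤ v i (X i)) :=
  complete_efx_with_indifferent_agent_general M n v hmono i₀ hi₀
end

section
/- Let an agent have an additive valuation v on a finite set M of goods, let n ≥ n' ≥ 1 be integers, and let M' ⊆ M be such that |M \ M'| ≤ n − n'. Then MMS(n', M') ≥ MMS(n, M), where MMS(k, S) denotes the maximin share of the agent for k bundles over the goods in S. -/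
/-- A valuation is additive if the value of a set is the sum of the values of its
singletons. -/
def AdditiveVal {G : Type} [DecidableEq G] (v : Finset G → ℝ) : Prop :=
  ∀ S : Finset G, v S = ∑ g ∈ S, v {g}

/-- The maximin share `MMS v k S`: the maximum, over all partitions of `S` into `k`
(possibly empty) bundles, of the minimum value of a bundle. -/
noncomputable def MMS {G : Type} [DecidableEq G] (v : Finset G → ℝ) (k : ℕ)
    (S : Finset G) : ℝ :=
  sSup {x : ℝ | ∃ Z : Fin k → Finset G,
    (∀ j j', j ≠ j' → Disjoint (Z j) (Z j')) ∧
    Finset.univ.biUnion Z = S ∧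
    x = ⨅ j : Fin k, v (Z j)}

/-!
Take a partition of `M` into `n` bundles. Each removed good lies in at most one bundle, so at
least `n'` bundles avoid `M \ M'` and hence lie inside `M'`. Keep `n'` of them and throw the
goods of `M'` they miss into one of them: this partitions `M'` into `n'` bundles, each containing
one of the original bundles, so by monotonicity of `v` its minimum is at least the original one.
-/

open Finset Function

variable {G : Type} [DecidableEq G]

theorem AdditiveVal.monotone {v : Finset G → ℝ} (hadd : AdditiveVal v)
    (hpos : ∀ g : G, 0 ≤ v {g}) : Monotone v := by
  intro S T hST
  rw [hadd S, hadd T]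
  exact sum_le_sum_of_subset_of_nonneg hST fun g _ _ => hpos g

theorem subset_update_union {ι : Type*} [DecidableEq ι] (Z : ι → Finset G) (R : Finset G)
    (i j : ι) : Z j ⊆ update Z i (Z i ∪ R) j := by
  rcases eq_or_ne j i with rfl | hj
  · simp
  · simp [update_of_ne hj]

def IsBundlePartition {ι : Type*} [Fintype ι] (Z : ι → Finset G) (S : Finset G) : Prop :=
  Pairwise (Disjoint on Z) ∧ univ.biUnion Z = S

namespace IsBundlePartition

variable {ι : Type*} [Fintype ι] {Z : ι → Finset G} {S : Finset G}

theorem subset (hZ : IsBundlePartition Z S) (i : ι) : Z i ⊆ S :=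
  hZ.2 ▸ subset_biUnion_of_mem Z (mem_univ i)

theorem update_union [DecidableEq ι] (hZ : IsBundlePartition Z S) {R : Finset G}
    (hR : Disjoint R S) (i : ι) :
    IsBundlePartition (update Z i (Z i ∪ R)) (S ∪ R) := by
  have hRZ : ∀ j, Disjoint R (Z j) := fun j => hR.mono_right (hZ.subset j)
  refine ⟨fun j j' hjj' => ?_, ?_⟩
  · simp only [onFun, update_apply]
    split_ifs with hj hj' hj'
    · exact absurd (hj.trans hj'.symm) hjj'
    · subst hj
      exact disjoint_union_left.2 ⟨hZ.1 hjj', hRZ j'⟩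
    · subst hj'
      exact disjoint_union_right.2 ⟨hZ.1 hjj', (hRZ j).symm⟩
    · exact hZ.1 hjj'
  · ext g
    simp only [mem_biUnion, mem_univ, true_and, mem_union, ← hZ.2, update_apply]
    constructor
    · rintro ⟨j, hg⟩
      split_ifs at hg with hj
      · exact (mem_union.1 hg).imp_left (⟨i, ·⟩)
      · exact Or.inl ⟨j, hg⟩
    · rintro (⟨j, hg⟩ | hg)
      · exact ⟨j, by split_ifs with hj <;> simp_all⟩
      · exact ⟨i, by simp [hg]⟩

end IsBundlePartition

theorem isBundlePartition_update_empty {ι : Type*} [Fintype ι] [DecidableEq ι] (i : ι)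
    (S : Finset G) : IsBundlePartition (update (fun _ => ∅) i S) S := by
  have hempty : IsBundlePartition (fun _ : ι => (∅ : Finset G)) ∅ :=
    ⟨fun _ _ _ => disjoint_empty_left _, by ext; simp⟩
  simpa using hempty.update_union (disjoint_empty_right S) i

theorem card_filter_not_disjoint_le {ι : Type*} [Fintype ι] {Z : ι → Finset G}
    (hZ : Pairwise (Disjoint on Z)) (D : Finset G) :
    #{i | ¬Disjoint (Z i) D} ≤ #D := by
  set T : Finset ι := {i | ¬Disjoint (Z i) D}
  calc #T = ∑ i ∈ T, 1 := card_eq_sum_ones T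
    _ ≤ ∑ i ∈ T, #(Z i ∩ D) := sum_le_sum fun i hi =>
        card_pos.2 (not_disjoint_iff_nonempty_inter.1 (mem_filter.1 hi).2)
    _ = #(T.biUnion fun i => Z i ∩ D) :=
        (card_biUnion fun i _ j _ hij => (hZ hij).mono inter_subset_left inter_subset_left).symm
    _ ≤ #D := card_le_card (biUnion_subset.2 fun _ _ => inter_subset_right)

theorem exists_embedding_forall_disjoint {ι : Type*} [Fintype ι] {Z : ι → Finset G}
    (hZ : Pairwise (Disjoint on Z)) {D : Finset G} {k : ℕ} (hk : #D + k ≤ Fintype.card ι) :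
    ∃ f : Fin k ↪ ι, ∀ j, Disjoint (Z (f j)) D := by
  have hU : k ≤ #({i | Disjoint (Z i) D} : Finset ι) := by
    have hsplit := card_filter_add_card_filter_not (s := univ) (fun i => Disjoint (Z i) D)
    have hT := card_filter_not_disjoint_le hZ D
    rw [card_univ] at hsplit
    omega
  obtain ⟨e⟩ := Embedding.nonempty_of_card_le (α := Fin k) (β := {i // Disjoint (Z i) D})
    (by rwa [Fintype.card_subtype, Fintype.card_fin])
  exact ⟨e.trans (Embedding.subtype _), fun j => (e j).2⟩

theorem IsBundlePartition.exists_of_card_sdiff_add_le {v : Finset G → ℝ} (hv : Monotone v)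
    {n n' : ℕ} (hn' : 0 < n') {M M' : Finset G} {Z : Fin n → Finset G}
    (hZ : IsBundlePartition Z M) (hcard : #(M \ M') + n' ≤ n) :
    ∃ W : Fin n' → Finset G, IsBundlePartition W M' ∧ ⨅ i, v (Z i) ≤ ⨅ j, v (W j) := by
  obtain ⟨f, hf⟩ := exists_embedding_forall_disjoint hZ.1 (by simpa using hcard)
  set S₀ := univ.biUnion (Z ∘ f)
  have hS₀ : S₀ ⊆ M' := biUnion_subset.2 fun j _ g hg => by
    by_contra hgM'
    exact disjoint_left.1 (hf j) hg (mem_sdiff.2 ⟨hZ.subset _ hg, hgM'⟩)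
  have hpart : IsBundlePartition (Z ∘ f) S₀ := ⟨hZ.1.comp_of_injective f.injective, rfl⟩
  have hW := hpart.update_union (sdiff_disjoint (t := M')) ⟨0, hn'⟩
  rw [union_sdiff_of_subset hS₀] at hW
  have : Nonempty (Fin n') := ⟨⟨0, hn'⟩⟩
  refine ⟨_, hW, le_ciInf fun j => ?_⟩
  exact (ciInf_le (Set.finite_range _).bddBelow (f j)).trans
    (hv (subset_update_union (Z ∘ f) _ _ j))

theorem le_mms_of_isBundlePartition {v : Finset G → ℝ} (hv : Monotone v) {k : ℕ} (hk : 0 < k)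
    {S : Finset G} {Z : Fin k → Finset G} (hZ : IsBundlePartition Z S) :
    ⨅ j, v (Z j) ≤ MMS v k S := by
  have : Nonempty (Fin k) := ⟨⟨0, hk⟩⟩
  refine le_csSup ⟨v S, ?_⟩ ⟨Z, fun _ _ h => hZ.1 h, hZ.2, rfl⟩
  rintro _ ⟨W, hdisj, hunion, rfl⟩
  exact (ciInf_le (Set.finite_range _).bddBelow ⟨0, hk⟩).trans
    (hv (IsBundlePartition.subset ⟨fun _ _ h => hdisj _ _ h, hunion⟩ _))

theorem mms_le {v : Finset G → ℝ} {k : ℕ} (hk : 0 < k) {S : Finset G} {x : ℝ}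
    (h : ∀ Z : Fin k → Finset G, IsBundlePartition Z S → ⨅ j, v (Z j) ≤ x) :
    MMS v k S ≤ x := by
  have hS := isBundlePartition_update_empty (⟨0, hk⟩ : Fin k) S
  refine csSup_le ⟨_, _, fun _ _ h => hS.1 h, hS.2, rfl⟩ ?_
  rintro _ ⟨Z, hdisj, hunion, rfl⟩
  exact h Z ⟨fun _ _ h => hdisj _ _ h, hunion⟩

theorem mms_monotone_under_reduction_general
    {G : Type} [DecidableEq G] (M : Finset G)
    (v : Finset G → ℝ)
    (hadd : AdditiveVal v)
    (hpos : ∀ g : G, 0 ≤ v {g})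
    (n n' : ℕ) (hn' : 1 ≤ n') (hnn' : n' ≤ n)
    (M' : Finset G)
    (hcard : (M \ M').card ≤ n - n') :
    MMS v n M ≤ MMS v n' M' := by
  have hv := hadd.monotone hpos
  refine mms_le (by omega) fun Z hZ => ?_
  obtain ⟨W, hW, hle⟩ := hZ.exists_of_card_sdiff_add_le (M' := M') hv hn' (by omega)
  exact hle.trans (le_mms_of_isBundlePartition hv hn' hW)

/-- Excluding at least as many agents as goods can only increase the maximin share. -/
theorem mms_monotone_under_reduction
    {G : Type} [DecidableEq G] (M : Finset G)
    (v : Finset G → ℝ)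
    (hadd : AdditiveVal v)
    (hpos : ∀ g : G, 0 ≤ v {g})
    (n n' : ℕ) (hn' : 1 ≤ n') (hnn' : n' ≤ n)
    (M' : Finset G) (hM' : M' ⊆ M)
    (hcard : (M \ M').card ≤ n - n') :
    MMS v n M ≤ MMS v n' M' :=
  mms_monotone_under_reduction_general M v hadd hpos n n' hn' hnn' M' hcard
end

section
/- Let all agents have additive valuations, let X = ⟨X_1,…,X_n⟩ be an EFX partial allocation with pool P such that v_i(X_i) ≥ v_i(P) for every agent i, and suppose agent 1 is a source of the envy-graph G_X. Define the complete allocation Y by Y_1 = X_1 ∪ P and Y_j = X_j for j ≠ 1. Then for every agent i: (a) for every agent j ∉ {1, i} and every good g ∈ Y_j with |Y_j| = 2, v_i({g}) ≤ v_i(Y_i); (b) v_i(Y_1) ≤ 2·v_i(Y_i); and (c) for every agent j ≠ 1 with |Y_j| ≥ 3, v_i(Y_j) ≤ (3/2)·v_i(Y_i). -/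
/-- Properties of the complete allocation `Y` obtained from an EFX allocation `X`
(where nobody envies the pool `P`) by giving the pool to the source agent `s₁`:
(a) bad goods (in bundles of size two other than `Y s₁` and `Y i`) are worth at most
`v i (Y i)`; (b) `v i (Y s₁) ≤ 2 v i (Y i)`; (c) bundles `Y j`, `j ≠ s₁`, of size at
least three are worth at most `(3/2) v i (Y i)`. -/
theorem good_and_bad_bundle_bounds
    {G : Type} [DecidableEq G] (M : Finset G) {n : ℕ}
    (v : Fin n → Finset G → ℝ)
    (hadd : ∀ i, AdditiveVal (v i))
    (hpos : ∀ i : Fin n, ∀ g : G, 0 ≤ v i {g})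
    (X : Fin n → Finset G)
    (hsub : ∀ i, X i ⊆ M)
    (hdisj : ∀ i j, i ≠ j → Disjoint (X i) (X j))
    (hEFX : ∀ i j : Fin n, ∀ g ∈ X j, v i (X j \ {g}) ≤ v i (X i))
    (hpool : ∀ i, v i (M \ Finset.univ.biUnion X) ≤ v i (X i))
    (s₁ : Fin n)
    (hsrc : ∀ j : Fin n, ¬ v j (X j) < v j (X s₁))
    (Y : Fin n → Finset G)
    (hY₁ : Y s₁ = X s₁ ∪ (M \ Finset.univ.biUnion X))
    (hYother : ∀ j, j ≠ s₁ → Y j = X j) :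
    ∀ i : Fin n,
      (∀ j : Fin n, j ≠ s₁ → j ≠ i → (Y j).card = 2 →
        ∀ g ∈ Y j, v i {g} ≤ v i (Y i)) ∧
      (v i (Y s₁) ≤ 2 * v i (Y i)) ∧
      (∀ j : Fin n, j ≠ s₁ → 3 ≤ (Y j).card → v i (Y j) ≤ (3 / 2) * v i (Y i)) := by
  classical
  set P := M \ Finset.univ.biUnion X with hP
  have hmono : ∀ k : Fin n, ∀ A B : Finset G, A ⊆ B → v k A ≤ v k B := by
    intro k A B hAB
    rw [hadd k A, hadd k B]
    exact Finset.sum_le_sum_of_subset_of_nonneg hAB (fun g _ _ => hpos k g)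
  have h0 : ∀ k : Fin n, ∀ S : Finset G, 0 ≤ v k S := by
    intro k S
    rw [hadd k S]
    exact Finset.sum_nonneg fun g _ => hpos k g
  have hdisjP : ∀ j : Fin n, Disjoint (X j) P := by
    intro j
    refine Finset.disjoint_left.2 fun a ha hap => ?_
    exact (Finset.mem_sdiff.1 hap).2 (Finset.mem_biUnion.2 ⟨j, Finset.mem_univ j, ha⟩)
  intro i
  have hYi : v i (X i) ≤ v i (Y i) := by
    by_cases hi : i = s₁
    · subst hi
      rw [hY₁]
      exact hmono i _ _ Finset.subset_union_left
    · rw [hYother i hi]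
  refine ⟨?_, ?_, ?_⟩
  · intro j hjs hji hcard g hg
    rw [hYother j hjs] at hg hcard
    obtain ⟨g', hg', hne⟩ := Finset.exists_mem_ne (s := X j) (by omega) g
    have hsub' : {g} ⊆ X j \ {g'} := by
      intro a ha
      rw [Finset.mem_singleton] at ha
      subst ha
      exact Finset.mem_sdiff.2 ⟨hg, Finset.notMem_singleton.2 hne.symm⟩
    calc v i {g} ≤ v i (X j \ {g'}) := hmono i _ _ hsub'
      _ ≤ v i (X i) := hEFX i j g' hg'
      _ ≤ v i (Y i) := hYi
  · have hds : Disjoint (X s₁) P := hdisjP s₁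
    have hsplit : v i (Y s₁) = v i (X s₁) + v i P := by
      rw [hY₁, hadd i, Finset.sum_union hds, ← hadd i, ← hadd i]
    have h1 : v i (X s₁) ≤ v i (X i) := not_lt.1 (hsrc i)
    have h2 : v i P ≤ v i (X i) := hpool i
    linarith
  · intro j hjs hc
    rw [hYother j hjs] at hc ⊢
    have hne : (X j).Nonempty := Finset.card_pos.1 (by omega)
    obtain ⟨g, hg, hmin⟩ := Finset.exists_min_image (X j) (fun h => v i {h}) hne
    have hsum : v i (X j) = v i (X j \ {g}) + v i {g} := by
      have hgs : {g} ⊆ X j := Finset.singleton_subset_iff.2 hg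
      rw [hadd i (X j), hadd i (X j \ {g}), ← Finset.sum_sdiff hgs, Finset.sum_singleton]
    have hcard : ((X j).card : ℝ) * v i {g} ≤ v i (X j) := by
      rw [hadd i (X j)]
      calc ((X j).card : ℝ) * v i {g} = ∑ _h ∈ X j, v i {g} := by
            rw [Finset.sum_const, nsmul_eq_mul]
        _ ≤ ∑ h ∈ X j, v i {h} := Finset.sum_le_sum fun h hh => hmin h hh
    have h3 : (3 : ℝ) * v i {g} ≤ ((X j).card : ℝ) * v i {g} := by
      apply mul_le_mul_of_nonneg_right _ (hpos i g)
      exact_mod_cast hc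
    have hE := hEFX i j g hg
    linarith
end
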